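/- Let G be a finite connected block graph and let X be the set of cut vertices of G. Then V(G) \ X is both a maximum mutual-visibility set and a maximum total mutual-visibility set of G; in particular μt(G) = μ(G) = n(G) − |X|, so every block graph satisfies μ(G) = μt(G). -/

import Mathlib

open SimpleGraph

/-- Vertices `x` and `y` are `X`-visible in `G`: some shortest `x,y`-path has
no internal vertex in `X`. -/
def Visible {V : Type*} (G : SimpleGraph V) (X : Set V) (x y : V) : Prop :=
  ∃ p : G.Walk x y, p.length = G.dist x y ∧ ∀ v ∈ p.support, v ∈ X → v = x ∨ v = y

/-- `X` is a mutual-visibility set of `G`: every two vertices of `X` are `X`-visible. -/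
def IsMVSet {V : Type*} (G : SimpleGraph V) (X : Set V) : Prop :=
  ∀ x ∈ X, ∀ y ∈ X, Visible G X x y

/-- `X` is a total mutual-visibility set of `G`: every two vertices of `G` are
`X`-visible. -/
def IsTMVSet {V : Type*} (G : SimpleGraph V) (X : Set V) : Prop :=
  ∀ x y : V, Visible G X x y

/-- The mutual-visibility number of `G`: the maximum cardinality of a
mutual-visibility set. -/
noncomputable def mu {V : Type*} (G : SimpleGraph V) : ℕ :=
  sSup {n | ∃ X : Set V, IsMVSet G X ∧ X.ncard = n}

/-- The total mutual-visibility number of `G`: the maximum cardinality of a total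
mutual-visibility set. -/
noncomputable def muT {V : Type*} (G : SimpleGraph V) : ℕ :=
  sSup {n | ∃ X : Set V, IsTMVSet G X ∧ X.ncard = n}

/-- A feasible total mutual-visibility set: a total mutual-visibility set `S` such that
any two adjacent vertices of `S` have a common neighbor outside `S`. -/
def IsFeasibleTMVSet {V : Type*} (G : SimpleGraph V) (S : Set V) : Prop :=
  IsTMVSet G S ∧ ∀ x ∈ S, ∀ y ∈ S, G.Adj x y → ∃ z ∉ S, G.Adj x z ∧ G.Adj y z

/-- The strong product of two simple graphs. -/
def strongProd {α β : Type*} (G : SimpleGraph α) (H : SimpleGraph β) :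
    SimpleGraph (α × β) where
  Adj x y := (G.Adj x.1 y.1 ∧ x.2 = y.2) ∨ (x.1 = y.1 ∧ H.Adj x.2 y.2) ∨
    (G.Adj x.1 y.1 ∧ H.Adj x.2 y.2)
  symm := ⟨by
    rintro ⟨a, b⟩ ⟨c, d⟩ (⟨h1, h2⟩ | ⟨h1, h2⟩ | ⟨h1, h2⟩)
    · exact Or.inl ⟨h1.symm, h2.symm⟩
    · exact Or.inr (Or.inl ⟨h1.symm, h2.symm⟩)
    · exact Or.inr (Or.inr ⟨h1.symm, h2.symm⟩)⟩
  loopless := ⟨by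
    rintro ⟨a, b⟩ (⟨h, _⟩ | ⟨_, h⟩ | ⟨h, _⟩)
    · exact G.irrefl h
    · exact H.irrefl h
    · exact G.irrefl h⟩

/-- The iterated (associative) strong product of a finite family of graphs:
two tuples are adjacent iff they are distinct and agree or are adjacent in every
coordinate. -/
def strongProdPi {k : ℕ} {V : Fin k → Type*} (G : ∀ i, SimpleGraph (V i)) :
    SimpleGraph (∀ i, V i) where
  Adj x y := x ≠ y ∧ ∀ i, x i = y i ∨ (G i).Adj (x i) (y i)
  symm := ⟨by
    rintro x y ⟨hne, h⟩
    exact ⟨hne.symm, fun i => (h i).imp Eq.symm fun hh => hh.symm⟩⟩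
  loopless := ⟨fun x h => h.1 rfl⟩

/-- A universal vertex: adjacent to all other vertices. -/
def IsUniversal {V : Type*} (G : SimpleGraph V) (v : V) : Prop :=
  ∀ u : V, u ≠ v → G.Adj v u

/-- A cut vertex: its removal disconnects the graph. -/
def IsCutVertex {V : Type*} (G : SimpleGraph V) (v : V) : Prop :=
  ¬ (G.induce ({v}ᶜ : Set V)).Preconnected

/-- An induced path: a path with no chords between its vertices. -/
def IsInducedPath {V : Type*} (G : SimpleGraph V) {u v : V} (p : G.Walk u v) : Prop :=
  p.IsPath ∧ ∀ a b : V, a ∈ p.support → b ∈ p.support → G.Adj a b → s(a, b) ∈ p.edges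

/-- A block graph: a connected graph in which every pair of vertices is joined
by a unique induced path. -/
def IsBlockGraph {V : Type*} (G : SimpleGraph V) : Prop :=
  G.Connected ∧ ∀ u v : V, ∃! p : G.Walk u v, IsInducedPath G p

/-- A convex set of vertices: every shortest path of `G` between two of its
vertices stays inside the set. -/
def IsConvexSet {V : Type*} (G : SimpleGraph V) (A : Set V) : Prop :=
  ∀ x ∈ A, ∀ y ∈ A, ∀ p : G.Walk x y, p.length = G.dist x y → ∀ v ∈ p.support, v ∈ A

/-- A cactus graph: a connected graph in which every edge lies in at most one cycle,
i.e. two cycles sharing an edge have the same edge set. -/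
def IsCactus {V : Type*} (G : SimpleGraph V) : Prop :=
  G.Connected ∧ ∀ (v : V) (p q : G.Walk v v), p.IsCycle → q.IsCycle →
    ∀ e, e ∈ p.edges → e ∈ q.edges → ∀ e', e' ∈ p.edges ↔ e' ∈ q.edges

/-- A cograph: obtained from a single vertex by repeatedly adding twins, i.e. there is
an enumeration of the vertices in which every vertex except the first is, at the
moment of its addition, a (true or false) twin of some earlier vertex in the induced
subgraph on the vertices added so far. -/
def IsCograph {V : Type*} (G : SimpleGraph V) : Prop :=
  ∃ l : List V, l.Nodup ∧ (∀ v : V, v ∈ l) ∧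
    ∀ i : Fin l.length, (i : ℕ) ≠ 0 →
      ∃ j : Fin l.length, (j : ℕ) < (i : ℕ) ∧
        ∀ z ∈ l.take ((i : ℕ) + 1), z ≠ l.get i → z ≠ l.get j →
          (G.Adj (l.get i) z ↔ G.Adj (l.get j) z)

/-- An enabling vertex: a vertex `v` adjacent to every vertex `u` of `G - v` whose
degree in `G - v` is less than `n(G) - 2`. -/
def IsEnabling {V : Type*} [Fintype V] (G : SimpleGraph V) (v : V) : Prop :=
  ∀ u : V, u ≠ v → (G.neighborSet u \ {v}).ncard < Fintype.card V - 2 → G.Adj v u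

section Helpers
variable {V : Type*} {G : SimpleGraph V}

lemma edge_mem_of_length_one {a b : V} (r : G.Walk a b) (h : r.length = 1) :
    s(a, b) ∈ r.edges := by
  cases r with
  | nil => simp at h
  | cons hadj t =>
    have ht : t.length = 0 := by simpa using h
    have hbc := Walk.eq_of_length_eq_zero ht
    subst hbc
    simp

lemma shortest_chord {x y : V} (p : G.Walk x y) (hp : p.length = G.dist x y)
    {a b : V} (ha : a ∈ p.support) (hb : b ∈ p.support) (hab : G.Adj a b) :
    s(a, b) ∈ p.edges := by
  classical
  have hspec := p.take_spec ha
  set q := p.takeUntil a ha with hq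
  set r := p.dropUntil a ha with hr
  have hlen : q.length + r.length = p.length := by
    have := congrArg Walk.length hspec
    rwa [Walk.length_append] at this
  rw [← hspec, Walk.mem_support_append_iff] at hb
  rcases hb with hb | hb
  · -- b is on q : Walk x a
    set q1 := q.takeUntil b hb with hq1
    set q2 := q.dropUntil b hb with hq2
    have hlq : q1.length + q2.length = q.length := by
      have := congrArg Walk.length (q.take_spec hb)
      rwa [Walk.length_append] at this
    have hW : G.dist x y ≤ q1.length + (r.length + 1) := by
      have := G.dist_le (q1.append (Walk.cons hab.symm r))
      simpa [Walk.length_append] using this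
    have hne : b ≠ a := hab.ne'
    have h0 : q2.length ≠ 0 := fun h0 => hne (Walk.eq_of_length_eq_zero h0)
    have h1 : q2.length = 1 := by omega
    have := edge_mem_of_length_one q2 h1
    have hsub : s(b, a) ∈ p.edges := by
      rw [← hspec]
      rw [Walk.edges_append]
      exact List.mem_append_left _ (Walk.edges_dropUntil_subset q hb this)
    rwa [Sym2.eq_swap] at hsub
  · -- b is on r : Walk a y
    set r1 := r.takeUntil b hb with hr1
    set r2 := r.dropUntil b hb with hr2
    have hlr : r1.length + r2.length = r.length := by
      have := congrArg Walk.length (r.take_spec hb)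
      rwa [Walk.length_append] at this
    have hW : G.dist x y ≤ q.length + (r2.length + 1) := by
      have := G.dist_le (q.append (Walk.cons hab r2))
      simpa [Walk.length_append] using this
    have hne : a ≠ b := hab.ne
    have h0 : r1.length ≠ 0 := fun h0 => hne (Walk.eq_of_length_eq_zero h0)
    have h1 : r1.length = 1 := by omega
    have := edge_mem_of_length_one r1 h1
    rw [← hspec, Walk.edges_append]
    exact List.mem_append_right _ (Walk.edges_takeUntil_subset r hb this)

/-- `u` and `w` are joined by a walk avoiding `v`. -/
def Avoid (G : SimpleGraph V) (v u w : V) : Prop :=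
  ∃ p : G.Walk u w, v ∉ p.support

lemma Avoid.symm {v u w : V} (h : Avoid G v u w) : Avoid G v w u := by
  obtain ⟨p, hp⟩ := h
  exact ⟨p.reverse, by simpa [Walk.support_reverse] using hp⟩

lemma Avoid.trans {v u w z : V} (h : Avoid G v u w) (h' : Avoid G v w z) :
    Avoid G v u z := by
  obtain ⟨p, hp⟩ := h; obtain ⟨q, hq⟩ := h'
  refine ⟨p.append q, fun hm => ?_⟩
  rw [Walk.mem_support_append_iff] at hm
  tauto

lemma avoid_refl {v u : V} (h : u ≠ v) : Avoid G v u u :=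
  ⟨Walk.nil, by simpa using h.symm⟩

lemma reachable_induce_of_all_mem {s : Set V} :
    ∀ {u w : V} (p : G.Walk u w) (hp : ∀ x ∈ p.support, x ∈ s),
      (G.induce s).Reachable ⟨u, hp u p.start_mem_support⟩ ⟨w, hp w p.end_mem_support⟩ := by
  intro u w p
  induction p with
  | nil => intro hp; exact Reachable.refl _
  | @cons u u' w h q ih =>
    intro hp
    have hu' : ∀ x ∈ q.support, x ∈ s := fun x hx => hp x (by simp [hx])
    have hadj : (G.induce s).Adj ⟨u, hp u (by simp)⟩ ⟨u', hu' u' q.start_mem_support⟩ := h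
    exact hadj.reachable.trans (ih hu')

lemma avoid_of_reachable_induce {s : Set V} {A B : s}
    (h : (G.induce s).Reachable A B) :
    ∃ p : G.Walk A.1 B.1, ∀ x ∈ p.support, x ∈ s := by
  obtain ⟨p'⟩ := h
  refine ⟨p'.map (SimpleGraph.Embedding.induce s).toHom, fun x hx => ?_⟩
  erw [Walk.support_map, List.mem_map] at hx
  obtain ⟨⟨x', hx'⟩, _, rfl⟩ := hx
  exact hx'

lemma reachable_induce_compl_of_avoid {v u w : V} (hu : u ≠ v) (hw : w ≠ v)
    (h : Avoid G v u w) :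
    (G.induce ({v}ᶜ : Set V)).Reachable ⟨u, by simpa using hu⟩ ⟨w, by simpa using hw⟩ := by
  obtain ⟨p, hp⟩ := h
  have hmem : ∀ x ∈ p.support, x ∈ ({v}ᶜ : Set V) := by
    intro x hx
    simp only [Set.mem_compl_iff, Set.mem_singleton_iff]
    rintro rfl; exact hp hx
  exact reachable_induce_of_all_mem p hmem

lemma avoid_of_not_cut {v : V} (h : ¬ IsCutVertex G v) {u w : V} (hu : u ≠ v) (hw : w ≠ v) :
    Avoid G v u w := by
  rw [IsCutVertex, not_not] at h
  have hr := h ⟨u, by simpa using hu⟩ ⟨w, by simpa using hw⟩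
  obtain ⟨p, hp⟩ := avoid_of_reachable_induce hr
  refine ⟨p, fun hm => ?_⟩
  have := hp v hm
  simp at this

end Helpers



section Main
variable {V : Type*} {G : SimpleGraph V}

lemma internal_cut (hG : IsBlockGraph G) {x y w : V} (p : G.Walk x y)
    (hp : p.length = G.dist x y) (hw : w ∈ p.support) (hwx : w ≠ x) (hwy : w ≠ y) :
    IsCutVertex G w := by
  classical
  have hspec := p.take_spec hw
  set p1 := p.takeUntil w hw with hp1
  set p2 := p.dropUntil w hw with hp2
  have hlen : p1.length + p2.length = p.length := by
    have := congrArg Walk.length hspec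
    rwa [Walk.length_append] at this
  obtain ⟨a, hwa, t1, h1⟩ := Walk.exists_eq_cons_of_ne hwx p1.reverse
  obtain ⟨b, hwb, t2, h2⟩ := Walk.exists_eq_cons_of_ne hwy p2
  have hl1 : p1.length = t1.length + 1 := by
    have : p1.reverse.length = t1.length + 1 := by rw [h1]; simp
    simpa [Walk.length_reverse] using this
  have hl2 : p2.length = t2.length + 1 := by rw [h2]; simp
  have key : ∀ W : G.Walk x y, ¬ (W.length + 1 ≤ p.length) := by
    intro W hW
    have := G.dist_le W
    omega
  have hnadj : ¬ G.Adj a b := by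
    intro hab
    exact key (t1.reverse.append (Walk.cons hab t2))
      (by simp [Walk.length_append, Walk.length_reverse]; omega)
  have hne : a ≠ b := by
    rintro rfl
    exact key (t1.reverse.append t2)
      (by simp [Walk.length_append, Walk.length_reverse]; omega)
  by_contra hncut
  rw [IsCutVertex, not_not] at hncut
  have haw : a ≠ w := hwa.ne'
  have hbw : b ≠ w := hwb.ne'
  have hreach := hncut ⟨a, by simpa using haw⟩ ⟨b, by simpa using hbw⟩
  obtain ⟨p', hp'path, hp'len⟩ := hreach.exists_path_of_dist
  let φ : G.induce ({w}ᶜ : Set V) →g G := ⟨Subtype.val, fun h => h⟩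
  set q : G.Walk a b := p'.map φ with hqdef
  have hqsupp : w ∉ q.support := by
    rw [hqdef, Walk.support_map, List.mem_map]
    rintro ⟨⟨x', hx'⟩, _, hval⟩
    exact hx' hval
  have hqpath : q.IsPath := Walk.map_isPath_of_injective Subtype.val_injective hp'path
  have hqind : IsInducedPath G q := by
    refine ⟨hqpath, fun a' b' ha' hb' hadj => ?_⟩
    rw [hqdef, Walk.support_map, List.mem_map] at ha' hb'
    obtain ⟨A, hA, rfl⟩ := ha'
    obtain ⟨B, hB, rfl⟩ := hb'
    have hadj' : (G.induce ({w}ᶜ : Set V)).Adj A B := hadj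
    have := shortest_chord p' hp'len hA hB hadj'
    rw [hqdef, Walk.edges_map]
    exact List.mem_map_of_mem this
  set P1 : G.Walk a b := Walk.cons hwa.symm (Walk.cons hwb Walk.nil) with hP1def
  have hP1ind : IsInducedPath G P1 := by
    constructor
    · rw [hP1def]
      simp [Walk.isPath_def, haw, hne, hwb.ne]
    · intro u1 u2 h1' h2' hadj
      have hs : P1.support = [a, w, b] := by rw [hP1def]; simp
      have he : P1.edges = [s(a, w), s(w, b)] := by rw [hP1def]; simp
      rw [hs] at h1' h2'
      rw [he]
      simp only [List.mem_cons, List.not_mem_nil, or_false] at h1' h2'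
      rcases h1' with rfl | rfl | rfl <;> rcases h2' with rfl | rfl | rfl <;>
        simp_all [Sym2.eq_swap] <;>
        first
          | exact absurd hadj (G.irrefl)
          | exact hnadj hadj
          | exact hnadj hadj.symm
  obtain ⟨P, _, hu⟩ := hG.2 a b
  have heq : P1 = q := (hu _ hP1ind).trans (hu _ hqind).symm
  apply hqsupp
  rw [← heq, hP1def]
  simp

end Main

section Main2
variable {V : Type*} {G : SimpleGraph V}

lemma tmv_compl_cut (hG : IsBlockGraph G) :
    IsTMVSet G ({v | IsCutVertex G v}ᶜ : Set V) := by
  intro x y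
  obtain ⟨p, hppath, hplen⟩ := hG.1.exists_path_of_dist x y
  refine ⟨p, hplen, fun v hv hvX => ?_⟩
  by_contra hc
  push_neg at hc
  exact hvX (internal_cut hG p hplen hv hc.1 hc.2)

lemma exists_good [Finite V] (hconn : G.Connected) {Y : Set V} (hY : IsMVSet G Y)
    {v : V} (hvY : v ∈ Y) (hvX : IsCutVertex G v) :
    ∃ m : V, m ∉ Y ∧ ¬ IsCutVertex G m ∧ ∀ y ∈ Y, y ≠ v → ¬ Avoid G v m y := by
  classical
  -- all of Y \ {v} is mutually connected avoiding v
  have hYconn : ∀ y1 ∈ Y, y1 ≠ v → ∀ y2 ∈ Y, y2 ≠ v → Avoid G v y1 y2 := by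
    intro y1 h1 h1v y2 h2 h2v
    obtain ⟨p, hlen, hint⟩ := hY y1 h1 y2 h2
    refine ⟨p, fun hv => ?_⟩
    rcases hint v hv hvY with rfl | rfl
    · exact h1v rfl
    · exact h2v rfl
  rw [IsCutVertex, SimpleGraph.Preconnected] at hvX
  push_neg at hvX
  obtain ⟨⟨a, ha⟩, ⟨b, hb⟩, hab⟩ := hvX
  have hav : a ≠ v := by simpa using ha
  have hbv : b ≠ v := by simpa using hb
  -- choose c not avoid-reachable from Y \ {v}
  have hc : ∃ c : V, c ≠ v ∧ ∀ y ∈ Y, y ≠ v → ¬ Avoid G v y c := by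
    by_cases hcase : ∃ y ∈ Y, y ≠ v ∧ Avoid G v y a
    · refine ⟨b, hbv, fun y hy hyv hAvB => ?_⟩
      obtain ⟨y0, hy0, hy0v, hy0a⟩ := hcase
      have hA : Avoid G v a b :=
        (hy0a.symm.trans (hYconn y0 hy0 hy0v y hy hyv)).trans hAvB
      exact hab (reachable_induce_compl_of_avoid hav hbv hA)
    · push_neg at hcase
      exact ⟨a, hav, fun y hy hyv => hcase y hy hyv⟩
  obtain ⟨c, hcv, hcY⟩ := hc
  set D : Set V := {u | u ≠ v ∧ Avoid G v u c} with hD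
  have hcD : c ∈ D := ⟨hcv, avoid_refl hcv⟩
  obtain ⟨m, hmD, hmax⟩ := Set.exists_max_image D (G.dist v) (Set.toFinite D) ⟨c, hcD⟩
  refine ⟨m, ?_, ?_, ?_⟩
  · intro h
    exact hcY m h hmD.1 hmD.2
  · -- m is not a cut vertex
    intro hcut
    have hvm : v ≠ m := hmD.1.symm
    rw [IsCutVertex, SimpleGraph.Preconnected] at hcut
    push_neg at hcut
    obtain ⟨⟨a', ha'⟩, ⟨b', hb'⟩, hab'⟩ := hcut
    have ha'm : a' ≠ m := by simpa using ha'
    have hb'm : b' ≠ m := by simpa using hb'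
    have hz : ∃ z, z ≠ m ∧ ¬ Avoid G m z v := by
      by_cases haa : Avoid G m a' v
      · by_cases hbb : Avoid G m b' v
        · exact absurd (reachable_induce_compl_of_avoid ha'm hb'm (haa.trans hbb.symm)) hab'
        · exact ⟨b', hb'm, hbb⟩
      · exact ⟨a', ha'm, haa⟩
    obtain ⟨z, hzm, hzv⟩ := hz
    have hzv' : z ≠ v := by
      rintro rfl
      exact hzv (avoid_refl hvm)
    have hnvz : ¬ Avoid G m v z := fun h => hzv h.symm
    obtain ⟨p, hppath, hplen⟩ := hconn.exists_path_of_dist v z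
    have hmp : m ∈ p.support := by
      by_contra h
      exact hnvz ⟨p, h⟩
    set p1 := p.takeUntil m hmp with hp1
    set p2 := p.dropUntil m hmp with hp2
    have hlen : p1.length + p2.length = p.length := by
      have := congrArg Walk.length (p.take_spec hmp)
      rwa [Walk.length_append] at this
    have hnd : (p1.support ++ p2.support.tail).Nodup := by
      rw [← Walk.support_append, p.take_spec hmp]
      exact hppath.support_nodup
    have hv2 : v ∉ p2.support := by
      intro hv2
      have hv2' : v ∈ p2.support.tail := by
        rw [p2.support_eq_cons] at hv2
        rcases List.mem_cons.1 hv2 with h | h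
        · exact absurd h hvm
        · exact h
      exact (List.disjoint_of_nodup_append hnd) p1.start_mem_support hv2'
    have hzD : z ∈ D := ⟨hzv', (Avoid.symm ⟨p2, hv2⟩).trans hmD.2⟩
    have hdist : G.dist v m ≤ p1.length := G.dist_le p1
    have hp2len : p2.length ≠ 0 := fun h => hzm.symm (Walk.eq_of_length_eq_zero h)
    have := hmax z hzD
    have hdvz : G.dist v z = p.length := hplen.symm
    omega
  · intro y hy hyv hA
    exact hcY y hy hyv (hA.symm.trans hmD.2)

end Main2

section Main3
variable {V : Type*} [Finite V] {G : SimpleGraph V}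

lemma mv_upper (hconn : G.Connected) {Y : Set V} (hY : IsMVSet G Y) :
    Y.ncard ≤ ({v | IsCutVertex G v}ᶜ : Set V).ncard := by
  classical
  set X : Set V := {v | IsCutVertex G v} with hXdef
  have hex : ∀ v : V, ∃ m, v ∈ Y ∩ X →
      (m ∉ Y ∧ ¬ IsCutVertex G m ∧ ∀ y ∈ Y, y ≠ v → ¬ Avoid G v m y) := by
    intro v
    by_cases h : v ∈ Y ∩ X
    · obtain ⟨m, hm⟩ := exists_good hconn hY h.1 h.2
      exact ⟨m, fun _ => hm⟩
    · exact ⟨v, fun hc => absurd hc h⟩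
  choose f hf using hex
  have hmaps : ∀ v ∈ Y ∩ X, f v ∈ Xᶜ \ Y := by
    intro v hv
    obtain ⟨h1, h2, _⟩ := hf v hv
    exact ⟨h2, h1⟩
  have hinj : Set.InjOn f (Y ∩ X) := by
    intro v hv v' hv' heq
    by_contra hne
    obtain ⟨hY1, _, hP⟩ := hf v hv
    obtain ⟨hY1', _, hP'⟩ := hf v' hv'
    have hA : ¬ Avoid G v (f v) v' := hP v' hv'.1 (Ne.symm hne)
    have hB : ¬ Avoid G v' (f v) v := by
      rw [heq]; exact hP' v hv.1 hne
    obtain ⟨q, hqpath, _⟩ := hconn.exists_path_of_dist (f v) v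
    have hv'q : v' ∈ q.support := by
      by_contra h
      exact hB ⟨q, h⟩
    set q1 := q.takeUntil v' hv'q with hq1
    set q2 := q.dropUntil v' hv'q with hq2
    have hnd : (q1.support ++ q2.support.tail).Nodup := by
      rw [← Walk.support_append, q.take_spec hv'q]
      exact hqpath.support_nodup
    have hvq1 : v ∉ q1.support := by
      intro hvq1
      have hvv' : v ≠ v' := Ne.symm (Ne.symm hne)
      have hv2' : v ∈ q2.support.tail := by
        have := q2.end_mem_support
        rw [q2.support_eq_cons] at this
        rcases List.mem_cons.1 this with h | h
        · exact absurd h hvv'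
        · exact h
      exact (List.disjoint_of_nodup_append hnd) hvq1 hv2'
    exact hA ⟨q1, hvq1⟩
  have h4 : (Y ∩ X).ncard ≤ (Xᶜ \ Y).ncard :=
    Set.ncard_le_ncard_of_injOn f hmaps hinj (Set.toFinite _)
  have h1 : (Y ∩ X).ncard + (Y \ X).ncard = Y.ncard :=
    Set.ncard_inter_add_ncard_diff_eq_ncard Y X
  have h2 : (Xᶜ ∩ Y).ncard + (Xᶜ \ Y).ncard = Xᶜ.ncard :=
    Set.ncard_inter_add_ncard_diff_eq_ncard Xᶜ Y
  have h3 : Y \ X = Xᶜ ∩ Y := by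
    ext u; simp [Set.mem_diff, and_comm]
  rw [h3] at h1
  omega

end Main3


theorem stmt_3 {V : Type*} [Fintype V] (G : SimpleGraph V) (hG : IsBlockGraph G)
    (X : Set V) (hX : X = {v | IsCutVertex G v}) :
    IsMVSet G Xᶜ ∧ IsTMVSet G Xᶜ ∧
    mu G = Xᶜ.ncard ∧ muT G = Xᶜ.ncard ∧
    muT G = mu G ∧ mu G = Fintype.card V - X.ncard := by
  have : Finite V := Finite.of_fintype V
  subst hX
  set X : Set V := {v | IsCutVertex G v} with hXdef
  have htmv : IsTMVSet G Xᶜ := tmv_compl_cut hG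
  have hmv : IsMVSet G Xᶜ := fun x _ y _ => htmv x y
  have hbound : ∀ (Y : Set V), Y.ncard ≤ Fintype.card V := by
    intro Y
    calc Y.ncard ≤ (Set.univ : Set V).ncard :=
          Set.ncard_le_ncard (Set.subset_univ Y) Set.finite_univ
      _ = Nat.card V := Set.ncard_univ V
      _ = Fintype.card V := Nat.card_eq_fintype_card
  have hmu : mu G = Xᶜ.ncard := by
    unfold mu
    apply le_antisymm
    · refine csSup_le ?_ ?_
      · exact ⟨Xᶜ.ncard, Xᶜ, hmv, rfl⟩
      · rintro n ⟨Y, hY, rfl⟩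
        exact mv_upper hG.1 hY
    · apply le_csSup
      · exact ⟨Fintype.card V, by rintro n ⟨Y, _, rfl⟩; exact hbound Y⟩
      · exact ⟨Xᶜ, hmv, rfl⟩
  have hmuT : muT G = Xᶜ.ncard := by
    unfold muT
    apply le_antisymm
    · refine csSup_le ?_ ?_
      · exact ⟨Xᶜ.ncard, Xᶜ, htmv, rfl⟩
      · rintro n ⟨Y, hY, rfl⟩
        exact mv_upper hG.1 (fun x _ y _ => hY x y)
    · apply le_csSup
      · exact ⟨Fintype.card V, by rintro n ⟨Y, _, rfl⟩; exact hbound Y⟩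
      · exact ⟨Xᶜ, htmv, rfl⟩
  have hcompl : X.ncard + Xᶜ.ncard = Nat.card V := Set.ncard_add_ncard_compl X
  have hcard : Nat.card V = Fintype.card V := Nat.card_eq_fintype_card
  refine ⟨hmv, htmv, hmu, hmuT, hmuT.trans hmu.symm, ?_⟩
  omega
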